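/- Let y : [0,T) → ℝ be the maximal solution of y^{(d+1)} = 2^d·y·y^{(d)} with y(0) = ⋯ = y^{(d−1)}(0) = 0 and y^{(d)}(0) = 1. Then for every τ ∈ [0,T), sup_{t∈[0,τ]} |f_p(t) − y^{(d)}(t)| → 0 as p → ∞. -/

import Mathlib

/-!
The `d`-th derivative `g = y⁽ᵈ⁾` solves the linear equation `g' = 2^d y g` with `g(0) = 1`,
so `g(t) = exp (2^d ∫₀ᵗ y)`. As the lower derivatives of `y` vanish at `0`, Cauchy's formula
for repeated integration gives `∫₀ᵗ y = ∫₀ᵗ (t-s)^d/d! g(s) ds`: `g` is a fixed point of the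
Picard map `Φ f (t) = exp (2^d/d! ∫₀ᵗ (t-s)^d f(s) ds)` whose iterates are the `f_p`. Since `Φ`
is monotone and `f_0 = 1 ≤ g`, all `f_p ≤ g`. On `[0, τ]`, where `g ≤ M`, the bound
`exp b - exp a ≤ exp b (b - a)` makes `Φ` Lipschitz below `g`, and induction gives
`0 ≤ g - f_p ≤ M (K t)^p / p!` with `K = M 2^d τ^d / d!`.
-/

open MeasureTheory ProbabilityTheory Filter

/-- `y` is a solution on `[0,T)` of the generalised Blasius-type Cauchy problem
`y^{(d+1)} = c·y·y^{(d)}`, `y(0) = ⋯ = y^{(d−1)}(0) = 0`, `y^{(d)}(0) = 1`. -/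
def IsBlasiusSolOn (d : ℕ) (c T : ℝ) (y : ℝ → ℝ) : Prop :=
  ContDiffOn ℝ (d + 1) y (Set.Ico 0 T) ∧
  (∀ k < d, iteratedDerivWithin k y (Set.Ico 0 T) 0 = 0) ∧
  iteratedDerivWithin d y (Set.Ico 0 T) 0 = 1 ∧
  ∀ t ∈ Set.Ico (0 : ℝ) T,
    iteratedDerivWithin (d + 1) y (Set.Ico 0 T) t
      = c * y t * iteratedDerivWithin d y (Set.Ico 0 T) t

/-- `y : [0,T)` is *the maximal solution* of the Cauchy problem
`y^{(d+1)} = c·y·y^{(d)}` with the Blasius initial conditions: it is a solution and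
no solution exists on a longer interval, so `T` is the explosion time. -/
def IsMaxBlasiusSol (d : ℕ) (c T : ℝ) (y : ℝ → ℝ) : Prop :=
  0 < T ∧ IsBlasiusSolOn d c T y ∧
    ∀ (T' : ℝ) (z : ℝ → ℝ), IsBlasiusSolOn d c T' z → T' ≤ T

/-- The Picard-type iterates `f_0 = 1`,
`f_{p+1}(t) = exp((2^d/d!)·∫_0^t (t−s)^d·f_p(s) ds)`. -/
noncomputable def blasiusIter (d : ℕ) : ℕ → ℝ → ℝ
  | 0 => fun _ => 1
  | (p + 1) => fun t =>
      Real.exp ((2 ^ d / (d.factorial : ℝ)) *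
        ∫ s in (0 : ℝ)..t, (t - s) ^ d * blasiusIter d p s)

open Set intervalIntegral Topology

theorem ContDiffOn.hasDerivAt_iteratedDerivWithin {n : WithTop ℕ∞} {k : ℕ} {f : ℝ → ℝ}
    {s : Set ℝ} {x : ℝ} (hf : ContDiffOn ℝ n f s) (hk : k < n) (hs : UniqueDiffOn ℝ s)
    (hx : s ∈ 𝓝 x) :
    HasDerivAt (iteratedDerivWithin k f s) (iteratedDerivWithin (k + 1) f s x) x := by
  rw [iteratedDerivWithin_succ, derivWithin_of_mem_nhds hx]
  exact ((hf.differentiableOn_iteratedDerivWithin hk hs).differentiableAt hx).hasDerivAt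

theorem hasDerivAt_integral_of_continuousOn {f : ℝ → ℝ} {a b x : ℝ}
    (hf : ContinuousOn f (Icc a b)) (hx : x ∈ Ioo a b) :
    HasDerivAt (fun u => ∫ s in a..u, f s) (f x) x := by
  have hIoo : ContinuousOn f (Ioo a b) := hf.mono Ioo_subset_Icc_self
  exact integral_hasDerivAt_right
    ((hf.mono (Icc_subset_Icc_right hx.2.le)).intervalIntegrable_of_Icc hx.1.le)
    (hIoo.stronglyMeasurableAtFilter isOpen_Ioo x hx) (hIoo.continuousAt (Ioo_mem_nhds hx.1 hx.2))

theorem eq_mul_exp_integral_of_hasDerivAt {g k : ℝ → ℝ} {a b : ℝ} (hab : a ≤ b)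
    (hg : ContinuousOn g (Icc a b)) (hk : ContinuousOn k (Icc a b))
    (hderiv : ∀ x ∈ Ioo a b, HasDerivAt g (k x * g x) x) :
    g b = g a * Real.exp (∫ s in a..b, k s) := by
  set K : ℝ → ℝ := fun u => ∫ s in a..u, k s
  have hK : ContinuousOn K (Icc a b) := by
    simpa [uIcc_of_le hab] using continuousOn_primitive_interval (hk.integrableOn_Icc.mono_set
      (uIcc_of_le hab).subset)
  have hu : ∀ x ∈ Ioo a b, HasDerivAt (fun u => g u * Real.exp (-K u)) 0 x := fun x hx =>
    ((hderiv x hx).mul (hasDerivAt_integral_of_continuousOn hk hx).neg.exp).congr_deriv (by ring)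
  have hconst : g b * Real.exp (-K b) = g a * Real.exp (-K a) := by
    have := integral_eq_sub_of_hasDerivAt_of_le hab (hg.mul hK.neg.rexp) hu
      intervalIntegrable_const
    rw [intervalIntegral.integral_zero] at this
    exact sub_eq_zero.1 this.symm
  simp only [K, integral_same, neg_zero, Real.exp_zero, mul_one, Real.exp_neg] at hconst
  rw [← hconst, mul_assoc, inv_mul_cancel₀ (Real.exp_pos _).ne', mul_one]

theorem hasDerivAt_sub_pow_succ_div_factorial (b x : ℝ) (n : ℕ) :
    HasDerivAt (fun s => (b - s) ^ (n + 1) / (n + 1).factorial)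
      (-((b - x) ^ n / n.factorial)) x := by
  have := (((hasDerivAt_id x).const_sub b).pow (n + 1)).div_const ((n + 1).factorial : ℝ)
  refine this.congr_deriv ?_
  rw [Nat.factorial_succ, Nat.cast_mul]
  field_simp
  simp [id]

/-- Cauchy's formula for repeated integration, `D (k + 1)` being the derivative of `D k`. -/
theorem integral_sub_pow_div_factorial_mul_eq_integral {n : ℕ} {a b : ℝ} (hab : a ≤ b)
    {D : ℕ → ℝ → ℝ} (hcont : ∀ k ≤ n, ContinuousOn (D k) (Icc a b))
    (hderiv : ∀ k < n, ∀ x ∈ Ioo a b, HasDerivAt (D k) (D (k + 1) x) x)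
    (hzero : ∀ k < n, D k a = 0) :
    ∫ s in a..b, (b - s) ^ n / n.factorial * D n s = ∫ s in a..b, D 0 s := by
  induction n with
  | zero => simp
  | succ n ih =>
    rw [← ih (fun k hk => hcont k (by omega)) (fun k hk => hderiv k (by omega))
      (fun k hk => hzero k (by omega))]
    have := integral_mul_deriv_eq_deriv_mul_of_hasDerivAt
      (u := fun s => (b - s) ^ (n + 1) / (n + 1).factorial) (v := D n)
      (u' := fun s => -((b - s) ^ n / n.factorial)) (v' := D (n + 1))
      (by rw [uIcc_of_le hab]; fun_prop) (by rw [uIcc_of_le hab]; exact hcont n (by omega))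
      (fun x _ => hasDerivAt_sub_pow_succ_div_factorial b x n)
      (by rw [min_eq_left hab, max_eq_right hab]; exact hderiv n (by omega))
      ((by fun_prop : Continuous _).intervalIntegrable a b)
      ((hcont (n + 1) le_rfl).intervalIntegrable_of_Icc hab)
    simpa [hzero n (by omega), intervalIntegral.integral_neg] using this

theorem Real.exp_sub_exp_le_exp_mul_sub (a b : ℝ) :
    Real.exp b - Real.exp a ≤ Real.exp b * (b - a) := by
  have h := mul_le_mul_of_nonneg_left (Real.add_one_le_exp (a - b)) (Real.exp_pos b).le
  rw [← Real.exp_add, add_sub_cancel] at h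
  linarith

theorem integral_pow_div_factorial (t : ℝ) (p : ℕ) :
    ∫ s in (0 : ℝ)..t, s ^ p / p.factorial = t ^ (p + 1) / (p + 1).factorial := by
  rw [intervalIntegral.integral_div, integral_pow, Nat.factorial_succ, Nat.cast_mul]
  field_simp
  push_cast
  ring

theorem intervalIntegrable_sub_pow_mul {f : ℝ → ℝ} {t : ℝ} (d : ℕ) (ht : 0 ≤ t)
    (hf : ContinuousOn f (Icc 0 t)) :
    IntervalIntegrable (fun s => (t - s) ^ d * f s) volume 0 t :=
  ((continuous_const.sub continuous_id).pow d).continuousOn.mul hf |>.intervalIntegrable_of_Icc ht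

noncomputable def blasiusMap (c : ℝ) (d : ℕ) (f : ℝ → ℝ) (t : ℝ) : ℝ :=
  Real.exp (c / d.factorial * ∫ s in (0 : ℝ)..t, (t - s) ^ d * f s)

theorem blasiusIter_succ (d p : ℕ) :
    blasiusIter d (p + 1) = blasiusMap (2 ^ d) d (blasiusIter d p) :=
  rfl

section blasiusMap

variable {c : ℝ} {d : ℕ} {f g : ℝ → ℝ} {t : ℝ}

theorem Continuous.blasiusMap (hf : Continuous f) : Continuous (blasiusMap c d f) :=
  (continuous_const.mul (intervalIntegral.continuous_parametric_intervalIntegral_of_continuous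
    (by fun_prop) continuous_id)).rexp

theorem continuous_blasiusIter (d p : ℕ) : Continuous (blasiusIter d p) := by
  induction p with
  | zero => exact continuous_const
  | succ p ih => exact ih.blasiusMap

theorem one_le_blasiusMap (hc : 0 ≤ c) (ht : 0 ≤ t) (hf : ∀ s ∈ Icc 0 t, 0 ≤ f s) :
    1 ≤ blasiusMap c d f t :=
  Real.one_le_exp (mul_nonneg (by positivity) (integral_nonneg ht fun s hs =>
    mul_nonneg (pow_nonneg (sub_nonneg.2 hs.2) d) (hf s hs)))

theorem blasiusMap_le_blasiusMap (hc : 0 ≤ c) (ht : 0 ≤ t) (hf : ContinuousOn f (Icc 0 t))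
    (hg : ContinuousOn g (Icc 0 t)) (hfg : ∀ s ∈ Icc 0 t, f s ≤ g s) :
    blasiusMap c d f t ≤ blasiusMap c d g t := by
  refine Real.exp_le_exp.2 (mul_le_mul_of_nonneg_left ?_ (by positivity))
  exact integral_mono_on ht (intervalIntegrable_sub_pow_mul d ht hf)
    (intervalIntegrable_sub_pow_mul d ht hg) fun s hs =>
      mul_le_mul_of_nonneg_left (hfg s hs) (pow_nonneg (sub_nonneg.2 hs.2) d)

theorem blasiusMap_sub_blasiusMap_le (ht : 0 ≤ t) (hf : ContinuousOn f (Icc 0 t))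
    (hg : ContinuousOn g (Icc 0 t)) :
    blasiusMap c d g t - blasiusMap c d f t ≤
      blasiusMap c d g t *
        (c / d.factorial * ∫ s in (0 : ℝ)..t, (t - s) ^ d * (g s - f s)) := by
  have hsub : ∫ s in (0 : ℝ)..t, (t - s) ^ d * (g s - f s) =
      (∫ s in (0 : ℝ)..t, (t - s) ^ d * g s) - ∫ s in (0 : ℝ)..t, (t - s) ^ d * f s := by
    simp only [mul_sub]
    exact integral_sub (intervalIntegrable_sub_pow_mul d ht hg)
      (intervalIntegrable_sub_pow_mul d ht hf)
  rw [hsub, mul_sub]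
  exact Real.exp_sub_exp_le_exp_mul_sub _ _

theorem one_le_of_eq_blasiusMap {τ : ℝ} (hc : 0 ≤ c)
    (hfix : ∀ t ∈ Icc 0 τ, g t = blasiusMap c d g t)
    (ht : t ∈ Icc 0 τ) : 1 ≤ g t := by
  rw [hfix t ht]
  exact one_le_blasiusMap hc ht.1 fun s hs => by
    rw [hfix s (Icc_subset_Icc_right ht.2 hs)]
    exact (Real.exp_pos _).le

end blasiusMap

theorem IsBlasiusSolOn.iteratedDerivWithin_eq_blasiusMap {d : ℕ} {c T : ℝ} {y : ℝ → ℝ}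
    (hy : IsBlasiusSolOn d c T y) {t : ℝ} (ht : t ∈ Ico 0 T) :
    iteratedDerivWithin d y (Ico 0 T) t = blasiusMap c d (iteratedDerivWithin d y (Ico 0 T)) t := by
  obtain ⟨hsmooth, hzero, hone, hode⟩ := hy
  have hsub : Icc 0 t ⊆ Ico 0 T := Icc_subset_Ico_right ht.2
  have hcont : ∀ k ≤ d + 1, ContinuousOn (iteratedDerivWithin k y (Ico 0 T)) (Icc 0 t) :=
    fun k hk => (hsmooth.continuousOn_iteratedDerivWithin (by exact_mod_cast hk)
      (uniqueDiffOn_Ico 0 T)).mono hsub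
  have hderiv : ∀ k ≤ d, ∀ x ∈ Ioo 0 t, HasDerivAt (iteratedDerivWithin k y (Ico 0 T))
      (iteratedDerivWithin (k + 1) y (Ico 0 T) x) x := fun k hk x hx =>
    hsmooth.hasDerivAt_iteratedDerivWithin (by exact_mod_cast Nat.lt_succ_of_le hk)
      (uniqueDiffOn_Ico 0 T) (Ico_mem_nhds hx.1 (hx.2.trans ht.2))
  have hexp : iteratedDerivWithin d y (Ico 0 T) t = Real.exp (∫ s in (0 : ℝ)..t, c * y s) := by
    have hy : ContinuousOn y (Icc 0 t) := by simpa using hcont 0 (Nat.zero_le _)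
    have := eq_mul_exp_integral_of_hasDerivAt (k := fun s => c * y s) ht.1
      (hcont d (Nat.le_succ d)) (continuousOn_const.mul hy) fun x hx => by
        simpa [hode x (hsub (Ioo_subset_Icc_self hx))] using hderiv d le_rfl x hx
    rwa [hone, one_mul] at this
  have hcauchy := integral_sub_pow_div_factorial_mul_eq_integral
    (D := fun k => iteratedDerivWithin k y (Ico 0 T)) ht.1
    (fun k hk => hcont k (Nat.le_succ_of_le hk)) (fun k hk => hderiv k hk.le) hzero
  simp only [iteratedDerivWithin_zero, div_eq_inv_mul, mul_assoc,
    intervalIntegral.integral_const_mul] at hcauchy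
  rw [blasiusMap, hexp, intervalIntegral.integral_const_mul, ← hcauchy, div_eq_mul_inv, mul_assoc]

section FixedPoint

variable {d : ℕ} {g : ℝ → ℝ} {τ : ℝ}

theorem blasiusIter_le_of_eq_blasiusMap (hg : ContinuousOn g (Icc 0 τ))
    (hfix : ∀ t ∈ Icc 0 τ, g t = blasiusMap (2 ^ d) d g t) (p : ℕ) :
    ∀ t ∈ Icc 0 τ, blasiusIter d p t ≤ g t := by
  have hτ : ∀ {t}, t ∈ Icc 0 τ → Icc 0 t ⊆ Icc 0 τ := fun ht => Icc_subset_Icc_right ht.2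
  induction p with
  | zero => exact fun t ht => one_le_of_eq_blasiusMap (by positivity) hfix ht
  | succ p ih =>
    intro t ht
    rw [hfix t ht, blasiusIter_succ]
    exact blasiusMap_le_blasiusMap (by positivity) ht.1 (continuous_blasiusIter d p).continuousOn
      (hg.mono (hτ ht)) fun s hs => ih s (hτ ht hs)

theorem sub_blasiusIter_le (hg : ContinuousOn g (Icc 0 τ))
    (hfix : ∀ t ∈ Icc 0 τ, g t = blasiusMap (2 ^ d) d g t) {M : ℝ}
    (hM : ∀ t ∈ Icc 0 τ, g t ≤ M) (p : ℕ) :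
    ∀ t ∈ Icc 0 τ, g t - blasiusIter d p t ≤
      M * (M * (2 ^ d / d.factorial) * τ ^ d) ^ p * (t ^ p / p.factorial) := by
  have hτ : ∀ {t}, t ∈ Icc 0 τ → Icc 0 t ⊆ Icc 0 τ := fun ht => Icc_subset_Icc_right ht.2
  set K := M * (2 ^ d / d.factorial) * τ ^ d
  induction p with
  | zero =>
    intro t ht
    simp only [blasiusIter, pow_zero, Nat.factorial_zero, Nat.cast_one, div_one, mul_one]
    linarith [hM t ht]
  | succ p ih =>
    intro t ht
    have hle := blasiusIter_le_of_eq_blasiusMap hg hfix p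
    have hcont : ContinuousOn (blasiusIter d p) (Icc 0 t) :=
      (continuous_blasiusIter d p).continuousOn
    have hintegral : ∫ s in (0 : ℝ)..t, (t - s) ^ d * (g s - blasiusIter d p s) ≤
        ∫ s in (0 : ℝ)..t, τ ^ d * (M * K ^ p * (s ^ p / p.factorial)) := by
      refine integral_mono_on ht.1 ?_ ((by fun_prop : Continuous fun s : ℝ =>
        τ ^ d * (M * K ^ p * (s ^ p / p.factorial))).intervalIntegrable 0 t) fun s hs =>
        mul_le_mul (pow_le_pow_left₀ (sub_nonneg.2 hs.2) (by linarith [hs.1, ht.2]) d)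
          (ih s (hτ ht hs)) (sub_nonneg.2 (hle s (hτ ht hs))) (pow_nonneg (ht.1.trans ht.2) d)
      exact intervalIntegrable_sub_pow_mul d ht.1 ((hg.mono (hτ ht)).sub hcont)
    have hintegral_nonneg : 0 ≤ ∫ s in (0 : ℝ)..t, (t - s) ^ d * (g s - blasiusIter d p s) :=
      integral_nonneg ht.1 fun s hs =>
        mul_nonneg (pow_nonneg (sub_nonneg.2 hs.2) d) (sub_nonneg.2 (hle s (hτ ht hs)))
    calc g t - blasiusIter d (p + 1) t
        = blasiusMap (2 ^ d) d g t - blasiusMap (2 ^ d) d (blasiusIter d p) t := by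
          rw [← hfix t ht, blasiusIter_succ]
      _ ≤ blasiusMap (2 ^ d) d g t * (2 ^ d / d.factorial *
            ∫ s in (0 : ℝ)..t, (t - s) ^ d * (g s - blasiusIter d p s)) :=
          blasiusMap_sub_blasiusMap_le ht.1 hcont (hg.mono (hτ ht))
      _ ≤ M * (2 ^ d / d.factorial *
            ∫ s in (0 : ℝ)..t, τ ^ d * (M * K ^ p * (s ^ p / p.factorial))) := by
          rw [← hfix t ht]
          gcongr
          · exact zero_le_one.trans
              ((one_le_of_eq_blasiusMap (by positivity) hfix ht).trans (hM t ht))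
          · exact hM t ht
      _ = M * K ^ (p + 1) * (t ^ (p + 1) / (p + 1).factorial) := by
          simp only [intervalIntegral.integral_const_mul, integral_pow_div_factorial, K]
          ring

theorem tendstoUniformlyOn_blasiusIter_of_eq_blasiusMap (hg : ContinuousOn g (Icc 0 τ))
    (hfix : ∀ t ∈ Icc 0 τ, g t = blasiusMap (2 ^ d) d g t) :
    TendstoUniformlyOn (blasiusIter d) g atTop (Icc 0 τ) := by
  obtain ⟨M, hM⟩ := isCompact_Icc.bddAbove_image hg
  replace hM : ∀ t ∈ Icc 0 τ, g t ≤ M := fun t ht => hM (mem_image_of_mem g ht)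
  set K := M * (2 ^ d / d.factorial) * τ ^ d
  rw [Metric.tendstoUniformlyOn_iff]
  intro ε hε
  have hlim : Tendsto (fun p => M * ((K * τ) ^ p / p.factorial)) atTop (𝓝 0) := by
    simpa using (FloorSemiring.tendsto_pow_div_factorial_atTop (K * τ)).const_mul M
  filter_upwards [hlim.eventually_lt_const hε] with p hp t ht
  have hτ : 0 ≤ τ := ht.1.trans ht.2
  have hM0 : 0 ≤ M :=
    zero_le_one.trans ((one_le_of_eq_blasiusMap (by positivity) hfix ht).trans (hM t ht))
  have hK0 : 0 ≤ K := by positivity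
  rw [Real.dist_eq, abs_of_nonneg (sub_nonneg.2 (blasiusIter_le_of_eq_blasiusMap hg hfix p t ht))]
  calc g t - blasiusIter d p t ≤ M * K ^ p * (t ^ p / p.factorial) :=
        sub_blasiusIter_le hg hfix hM p t ht
    _ = M * (K ^ p * t ^ p / p.factorial) := by ring
    _ ≤ M * (K ^ p * τ ^ p / p.factorial) := by gcongr; exacts [ht.1, ht.2]
    _ = M * ((K * τ) ^ p / p.factorial) := by ring
    _ < ε := hp

end FixedPoint

theorem blasiusIter_tendstoUniformly_general (d : ℕ)
    (T : ℝ) (y : ℝ → ℝ) (hy : IsMaxBlasiusSol d (2 ^ d) T y) :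
    ∀ τ ∈ Set.Ico (0 : ℝ) T,
      TendstoUniformlyOn (fun p => blasiusIter d p)
        (fun t => iteratedDerivWithin d y (Set.Ico 0 T) t) atTop (Set.Icc 0 τ) := by
  obtain ⟨-, hsol, -⟩ := hy
  intro τ hτ
  have hsub : Icc 0 τ ⊆ Ico 0 T := Icc_subset_Ico_right hτ.2
  exact tendstoUniformlyOn_blasiusIter_of_eq_blasiusMap
    ((hsol.1.continuousOn_iteratedDerivWithin (by exact_mod_cast Nat.le_succ d)
      (uniqueDiffOn_Ico 0 T)).mono hsub)
    fun t ht => hsol.iteratedDerivWithin_eq_blasiusMap (hsub ht)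

/-- If `y : [0,T)` is the maximal solution of `y^{(d+1)} = 2^d·y·y^{(d)}`
with the Blasius initial conditions, then for every `τ ∈ [0,T)`,
`sup_{t∈[0,τ]} |f_p(t) − y^{(d)}(t)| → 0` as `p → ∞`. -/
theorem blasiusIter_tendstoUniformly (d : ℕ) (hd : 1 ≤ d)
    (T : ℝ) (y : ℝ → ℝ) (hy : IsMaxBlasiusSol d (2 ^ d) T y) :
    ∀ τ ∈ Set.Ico (0 : ℝ) T,
      TendstoUniformlyOn (fun p => blasiusIter d p)
        (fun t => iteratedDerivWithin d y (Set.Ico 0 T) t) atTop (Set.Icc 0 τ) :=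
  blasiusIter_tendstoUniformly_general d T y hy
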